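/- arXiv:2604.02030 — 6 statements merged into one kernel-verified Lean document; each statement's English description precedes it below -/
import Mathlib

section
/- Suppose ΔP ≥ m/2 with m > 0, and let α_R, α_H ∈ [0,1] with α_R + α_H ≤ 1. If z* ∈ [0,1] satisfies z* = α_R·w + α_H·𝟙{z* ≥ 1/2} for some w ∈ [0,1] with support condition S(w) ⊆ Argmax of the rational utility at z*, and z* ≠ 1/2, then z* = 0 or z* = α_H, and z* = α_H is possible only if α_H > 1/2. -/
/-- with ΔP ≥ m/2, any equilibrium z* ≠ 1/2 is 0 or α_H,
and z* = α_H only when α_H > 1/2. -/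
theorem stmt3 (m ΔP αR αH : ℝ) (hm : 0 < m) (hΔ : 0 < ΔP) (hΔm : m / 2 ≤ ΔP)
    (hαR : αR ∈ Set.Icc (0 : ℝ) 1) (hαH : αH ∈ Set.Icc (0 : ℝ) 1)
    (hsum : αR + αH ≤ 1)
    (h : ℝ → ℝ) (hdef : ∀ z, h z = 2 * m * z * (1 - z) - ΔP)
    (zstar w : ℝ) (hz : zstar ∈ Set.Icc (0 : ℝ) 1) (hw : w ∈ Set.Icc (0 : ℝ) 1)
    (heq : zstar = αR * w + αH * (if (1 : ℝ) / 2 ≤ zstar then 1 else 0))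
    (hBRneg : h zstar < 0 → w = 0)
    (hBRpos : 0 < h zstar → w = 1)
    (hne : zstar ≠ 1 / 2) :
    zstar = 0 ∨ (zstar = αH ∧ 1 / 2 < αH) := by
  have hlt : h zstar < 0 := by
    rw [hdef]
    have hne2 : zstar - 1/2 ≠ 0 := sub_ne_zero.mpr hne
    have : (zstar - 1/2)^2 > 0 := by positivity
    nlinarith
  have hw0 : w = 0 := hBRneg hlt
  subst hw0
  rw [mul_zero, zero_add] at heq
  by_cases hc : (1:ℝ)/2 ≤ zstar
  · right
    rw [if_pos hc, mul_one] at heq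
    exact ⟨heq, by rcases lt_or_eq_of_le hc with h'|h' <;> [exact heq ▸ h'; exact absurd h'.symm hne]⟩
  · left
    rw [if_neg hc, mul_zero] at heq
    exact heq
end

section
/- Suppose ΔP ≥ m/2, m > 0, and α_H > 1/2. Then z* = α_H is an attractor of M(z) = α_R·𝟙{h(z) ≥ 0} + α_H·𝟙{z ≥ 1/2} − z: there exists ε > 0 such that M(z) = α_H − z > 0 on (α_H − ε, α_H) and M(z) < 0 on (α_H, α_H + ε). -/
/-- when ΔP ≥ m/2 and α_H > 1/2, z* = α_H is an attractor of M. -/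
theorem stmt10 (m ΔP αR αH : ℝ) (hm : 0 < m) (hΔ : 0 < ΔP) (hΔm : m / 2 ≤ ΔP)
    (hαR : 0 ≤ αR) (hαH2 : 1 / 2 < αH) (hαH1 : αH < 1) (hsum : αR + αH ≤ 1)
    (h M : ℝ → ℝ) (hdef : ∀ z, h z = 2 * m * z * (1 - z) - ΔP)
    (hM : ∀ z, M z = αR * (if 0 ≤ h z then 1 else 0) +
        αH * (if (1 : ℝ) / 2 ≤ z then 1 else 0) - z) :
    ∃ ε > (0 : ℝ),
      (∀ z : ℝ, αH - ε < z → z < αH → M z = αH - z ∧ 0 < M z) ∧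
      (∀ z : ℝ, αH < z → z < αH + ε → M z < 0) := by
  refine ⟨αH - 1/2, by linarith, ?_, ?_⟩ <;> intro z hz1 hz2 <;>
  · have hz : (1:ℝ)/2 < z := by linarith
    have hh : h z < 0 := by
      rw [hdef]; nlinarith [mul_pos hm (mul_pos (sub_pos.mpr hz) (sub_pos.mpr hz))]
    have : M z = αH - z := by
      rw [hM, if_neg (not_le.mpr hh), if_pos (by linarith)]; ring
    first
    | exact ⟨this, by linarith⟩
    | (rw [this]; linarith)
end

section
/- Suppose m > 0, 0 < ΔP < m/2, and α_R ≥ R⁻ where R⁻ = (1 − √(1 − 2ΔP/m))/2. Then z* = R⁻ is an equilibrium (there exists w ∈ [0,1] with R⁻ = α_R·w) but it is not an attractor of M(z) = α_R·𝟙{h(z) ≥ 0} + α_H·𝟙{z ≥ 1/2} − z, provided R⁻ < 1/2 and α_R < 1/2: indeed M(z) > 0 for z in a right neighborhood of R⁻ when α_R > R⁻. -/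
/-- with α_R ≥ R⁻, z* = R⁻ is an equilibrium but, provided
R⁻ < 1/2 and α_R < 1/2 and α_R > R⁻, it is not an attractor: M > 0 on a
right neighborhood of R⁻. -/
theorem stmt12 (m ΔP αR αH : ℝ) (hm : 0 < m) (hΔ : 0 < ΔP) (hΔm : ΔP < m / 2)
    (hαR : αR ∈ Set.Icc (0 : ℝ) 1) (hαH : 0 ≤ αH) (hsum : αR + αH ≤ 1)
    (h M : ℝ → ℝ) (hdef : ∀ z, h z = 2 * m * z * (1 - z) - ΔP)
    (hM : ∀ z, M z = αR * (if 0 ≤ h z then 1 else 0) +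
        αH * (if (1 : ℝ) / 2 ≤ z then 1 else 0) - z)
    (Rminus : ℝ) (hRm : Rminus = (1 - Real.sqrt (1 - 2 * ΔP / m)) / 2)
    (hge : Rminus ≤ αR) (hRhalf : Rminus < 1 / 2) (hαRhalf : αR < 1 / 2) :
    (∃ w : ℝ, w ∈ Set.Icc (0 : ℝ) 1 ∧ Rminus = αR * w) ∧
      (Rminus < αR →
        (∃ ε > (0 : ℝ), ∀ z : ℝ, Rminus < z → z < Rminus + ε → 0 < M z) ∧
        ¬ ∃ ε > (0 : ℝ),
            (∀ z : ℝ, Rminus - ε < z → z < Rminus → 0 < M z) ∧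
            (∀ z : ℝ, Rminus < z → z < Rminus + ε → M z < 0)) := by
  set s := Real.sqrt (1 - 2 * ΔP / m) with hs
  have harg : 0 < 1 - 2 * ΔP / m := by
    have : 2 * ΔP / m < 1 := by
      rw [div_lt_one hm]; linarith
    linarith
  have hs0 : 0 < s := Real.sqrt_pos.mpr harg
  have hs1 : s < 1 := by
    have : s < Real.sqrt 1 := by
      apply Real.sqrt_lt_sqrt (le_of_lt harg)
      have : 0 < 2 * ΔP / m := by positivity
      linarith
    simpa using this
  have hsq : s ^ 2 = 1 - 2 * ΔP / m := Real.sq_sqrt (le_of_lt harg)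
  have hRpos : 0 < Rminus := by rw [hRm]; linarith
  have hαRpos : 0 < αR := lt_of_lt_of_le hRpos hge
  -- key: for Rminus < z < (1+s)/2, h z > 0
  have hkey : ∀ z : ℝ, Rminus < z → z < (1 + s) / 2 → 0 < h z := by
    intro z h1 h2
    rw [hdef]
    have h1' : (1 - s) / 2 < z := by rwa [hRm] at h1
    have hmn : 0 ≠ m := ne_of_lt hm
    have hdiv : 2 * ΔP = m * (1 - s ^ 2) := by
      field_simp at hsq ⊢
      nlinarith [hsq]
    nlinarith [mul_pos (sub_pos.mpr h1') (sub_pos.mpr h2), hm]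
  refine ⟨⟨Rminus / αR, ⟨by positivity, by
    rw [div_le_one hαRpos]; exact hge⟩, by field_simp⟩, ?_⟩
  intro hlt
  set ε := min (αR - Rminus) (min ((1 + s) / 2 - Rminus) (1 / 2 - Rminus)) with hε
  have hε0 : 0 < ε := by
    apply lt_min (by linarith) (lt_min ?_ (by linarith))
    rw [hRm]; linarith
  have hpos : ∀ z : ℝ, Rminus < z → z < Rminus + ε → 0 < M z := by
    intro z h1 h2
    have hz1 : z < αR := lt_of_lt_of_le (lt_of_lt_of_le h2 (by linarith [min_le_left (αR - Rminus) (min ((1 + s) / 2 - Rminus) (1 / 2 - Rminus))])) le_rfl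
    have hz2 : z < (1 + s) / 2 := by
      have := min_le_of_right_le (b := min ((1 + s) / 2 - Rminus) (1 / 2 - Rminus))
        (min_le_left _ (1 / 2 - Rminus)) (a := αR - Rminus)
      linarith [h2, this]
    have hz3 : z < 1 / 2 := by
      have := min_le_of_right_le (b := min ((1 + s) / 2 - Rminus) (1 / 2 - Rminus))
        (min_le_right ((1 + s) / 2 - Rminus) _) (a := αR - Rminus)
      linarith [h2, this]
    have hh := hkey z h1 hz2
    rw [hM, if_pos (le_of_lt hh), if_neg (by linarith)]
    linarith
  refine ⟨⟨ε, hε0, hpos⟩, ?_⟩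
  rintro ⟨δ, hδ0, -, hneg⟩
  set z := Rminus + min ε δ / 2 with hz
  have hmin0 : 0 < min ε δ := lt_min hε0 hδ0
  have h1 : Rminus < z := by rw [hz]; linarith
  have h2 : z < Rminus + ε := by
    have := min_le_left ε δ; rw [hz]; linarith
  have h3 : z < Rminus + δ := by
    have := min_le_right ε δ; rw [hz]; linarith
  exact absurd (hpos z h1 h2) (not_lt.mpr (le_of_lt (hneg z h1 h3)))
end

section
/- Suppose m > 0, 0 < ΔP < m/2, α_R + α_H ≤ 1, and α_H ≤ R⁺ ≤ α_R + α_H. Then z* = R⁺ is an attractor of M(z) = α_R·𝟙{h(z) ≥ 0} + α_H·𝟙{z ≥ 1/2} − z: for small ε > 0, M(z) = α_R + α_H − z > 0 on (R⁺ − ε, R⁺) and M(z) = α_H − z < 0 on (R⁺, R⁺ + ε), provided α_H < R⁺ < α_R + α_H (strict inequalities). -/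
/-!
Completing the square, `2 m z (1 - z) - ΔP = (m / 2) (s² - (2z - 1)²)` with `s = √(1 - 2ΔP/m)`,
so for `z ≥ 1/2` the sign of `h z` is that of `(1 + s)/2 - z = R⁺ - z`. Since `R⁺ > 1/2`, on
`(1/2, R⁺)` both indicators of `M` are on and `M z = α_R + α_H - z > 0` because `R⁺ < α_R + α_H`;
just above `R⁺` only the second one is, and `M z = α_H - z < 0` because `α_H < R⁺`.
-/

namespace RootAttractor

open Real

variable {m ΔP z : ℝ}

lemma two_mul_mul_one_sub_sub_eq (hm : m ≠ 0) :
    2 * m * z * (1 - z) - ΔP = m / 2 * ((1 - 2 * ΔP / m) - (2 * z - 1) ^ 2) := by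
  field_simp
  ring

lemma half_lt_upperRoot (hm : 0 < m) (hΔm : ΔP < m / 2) :
    1 / 2 < (1 + √(1 - 2 * ΔP / m)) / 2 := by
  have : 2 * ΔP / m < 1 := by rw [div_lt_one hm]; linarith
  have : 0 < √(1 - 2 * ΔP / m) := sqrt_pos.mpr (by linarith)
  linarith

lemma nonneg_of_half_le_of_le_upperRoot (hm : 0 < m) (hΔm : ΔP ≤ m / 2) (hz₀ : 1 / 2 ≤ z)
    (hz₁ : z ≤ (1 + √(1 - 2 * ΔP / m)) / 2) :
    0 ≤ 2 * m * z * (1 - z) - ΔP := by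
  have hrad : 0 ≤ 1 - 2 * ΔP / m := by
    rw [sub_nonneg, div_le_one hm]; linarith
  have hsq : (2 * z - 1) ^ 2 ≤ 1 - 2 * ΔP / m :=
    (le_sqrt (by linarith) hrad).mp (by linarith)
  rw [two_mul_mul_one_sub_sub_eq hm.ne']
  exact mul_nonneg (by positivity) (sub_nonneg.mpr hsq)

lemma neg_of_upperRoot_lt (hm : 0 < m) (hz : (1 + √(1 - 2 * ΔP / m)) / 2 < z) :
    2 * m * z * (1 - z) - ΔP < 0 := by
  have hsq : 1 - 2 * ΔP / m < (2 * z - 1) ^ 2 :=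
    (sqrt_lt' (by linarith [sqrt_nonneg (1 - 2 * ΔP / m)])).mp (by linarith)
  rw [two_mul_mul_one_sub_sub_eq hm.ne']
  exact mul_neg_of_pos_of_neg (by positivity) (sub_neg.mpr hsq)

end RootAttractor

open RootAttractor in
theorem stmt13_general (m ΔP αR αH : ℝ) (hm : 0 < m) (hΔm : ΔP < m / 2)
    (h M : ℝ → ℝ) (hdef : ∀ z, h z = 2 * m * z * (1 - z) - ΔP)
    (hM : ∀ z, M z = αR * (if 0 ≤ h z then 1 else 0) +
        αH * (if (1 : ℝ) / 2 ≤ z then 1 else 0) - z)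
    (Rplus : ℝ) (hRp : Rplus = (1 + Real.sqrt (1 - 2 * ΔP / m)) / 2)
    (hlow : αH < Rplus) (hhigh : Rplus < αR + αH) :
    ∃ ε > (0 : ℝ),
      (∀ z : ℝ, Rplus - ε < z → z < Rplus → M z = αR + αH - z ∧ 0 < M z) ∧
      (∀ z : ℝ, Rplus < z → z < Rplus + ε → M z = αH - z ∧ M z < 0) := by
  have hhalf : 1 / 2 < Rplus := hRp ▸ half_lt_upperRoot hm hΔm
  refine ⟨Rplus - 1 / 2, by linarith, fun z hz₀ hz₁ => ?_, fun z hz₀ _ => ?_⟩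
  · have hh : 0 ≤ h z := hdef z ▸
      nonneg_of_half_le_of_le_upperRoot hm hΔm.le (by linarith) (hRp ▸ hz₁.le)
    have hMz : M z = αR + αH - z := by
      rw [hM, if_pos hh, if_pos (by linarith)]
      ring
    exact ⟨hMz, by linarith⟩
  · have hh : ¬ 0 ≤ h z := by
      rw [hdef, not_le]
      exact neg_of_upperRoot_lt hm (hRp ▸ hz₀)
    have hMz : M z = αH - z := by
      rw [hM, if_neg hh, if_pos (by linarith)]
      ring
    exact ⟨hMz, by linarith⟩

/-- when α_H < R⁺ < α_R + α_H, z* = R⁺ is an attractor of M. -/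
theorem stmt13 (m ΔP αR αH : ℝ) (hm : 0 < m) (hΔ : 0 < ΔP) (hΔm : ΔP < m / 2)
    (hαR : αR ∈ Set.Icc (0 : ℝ) 1) (hαH : αH ∈ Set.Icc (0 : ℝ) 1)
    (hsum : αR + αH ≤ 1)
    (h M : ℝ → ℝ) (hdef : ∀ z, h z = 2 * m * z * (1 - z) - ΔP)
    (hM : ∀ z, M z = αR * (if 0 ≤ h z then 1 else 0) +
        αH * (if (1 : ℝ) / 2 ≤ z then 1 else 0) - z)
    (Rplus : ℝ) (hRp : Rplus = (1 + Real.sqrt (1 - 2 * ΔP / m)) / 2)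
    (hlow : αH < Rplus) (hhigh : Rplus < αR + αH) :
    ∃ ε > (0 : ℝ),
      (∀ z : ℝ, Rplus - ε < z → z < Rplus → M z = αR + αH - z ∧ 0 < M z) ∧
      (∀ z : ℝ, Rplus < z → z < Rplus + ε → M z = αH - z ∧ M z < 0) :=
  stmt13_general m ΔP αR αH hm hΔm h M hdef hM Rplus hRp hlow hhigh
end

section
/- In the rational–herding game (α_R + α_H = 1), if ΔP < m/2 and α_R ≥ 1/2, then the set of attractors of M(z) = α_R·𝟙{h(z) ≥ 0} + (1−α_R)·𝟙{z ≥ 1/2} − z is exactly {0, R⁺}. -/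
set_option maxHeartbeats 1000000 in
/-- in the rational–herding game (α_R + α_H = 1) with ΔP < m/2
and α_R ≥ 1/2, the set of attractors of M in [0,1] is exactly {0, R⁺}. -/
theorem stmt14 (m ΔP αR : ℝ) (hm : 0 < m) (hΔ : 0 < ΔP) (hΔm : ΔP < m / 2)
    (hαR : αR ∈ Set.Icc (0 : ℝ) 1) (hαRhalf : 1 / 2 ≤ αR)
    (h M : ℝ → ℝ) (hdef : ∀ z, h z = 2 * m * z * (1 - z) - ΔP)
    (hM : ∀ z, M z = αR * (if 0 ≤ h z then 1 else 0) +
        (1 - αR) * (if (1 : ℝ) / 2 ≤ z then 1 else 0) - z)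
    (Rplus : ℝ) (hRp : Rplus = (1 + Real.sqrt (1 - 2 * ΔP / m)) / 2) :
    ∀ z : ℝ, (z ∈ Set.Icc (0 : ℝ) 1 ∧
        ∃ ε > (0 : ℝ),
          (∀ y : ℝ, z - ε < y → y < z → 0 ≤ y → 0 < M y) ∧
          (∀ y : ℝ, z < y → y < z + ε → y ≤ 1 → M y < 0)) ↔
      (z = 0 ∨ z = Rplus) := by
  obtain ⟨hαR0, hαR1⟩ := hαR
  obtain ⟨s, hs⟩ : ∃ s, s = Real.sqrt (1 - 2 * ΔP / m) := ⟨_, rfl⟩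
  rw [← hs] at hRp
  have harg : 0 ≤ 1 - 2 * ΔP / m := by
    have h1 : 2 * ΔP / m ≤ 1 := by
      rw [div_le_one hm]; linarith
    linarith
  have hs2 : s ^ 2 = 1 - 2 * ΔP / m := by rw [hs]; exact Real.sq_sqrt harg
  have hs0 : 0 < s := hs ▸ Real.sqrt_pos.mpr (by
    have h1 : 2 * ΔP / m < 1 := by rw [div_lt_one hm]; linarith
    linarith)
  have hs1 : s < 1 := by
    have hpos : 0 < 2 * ΔP / m := by positivity
    nlinarith [hs2, hs0]
  have hms : m * s ^ 2 = m - 2 * ΔP := by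
    have h1 : m * s ^ 2 = m * (1 - 2 * ΔP / m) := by rw [hs2]
    rw [h1]; field_simp
  have hfact : ∀ z, h z = -(2 * m) * (z - (1 - s) / 2) * (z - Rplus) := by
    intro z; rw [hdef, hRp]
    linear_combination (-(1 / 2 : ℝ)) * hms
  have hRm_pos : 0 < (1 - s) / 2 := by linarith
  have hRm_half : (1 - s) / 2 < 1 / 2 := by linarith
  have hRp_half : 1 / 2 < Rplus := by rw [hRp]; linarith
  have hRp_lt1 : Rplus < 1 := by rw [hRp]; linarith
  have hlt : ∀ y, y < (1 - s) / 2 → h y < 0 := by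
    intro y hy; rw [hfact y]
    have h2 : y < Rplus := by linarith
    nlinarith [mul_pos (show (0:ℝ) < (1 - s) / 2 - y by linarith)
      (show (0:ℝ) < Rplus - y by linarith)]
  have hgt : ∀ y, Rplus < y → h y < 0 := by
    intro y hy; rw [hfact y]
    nlinarith [mul_pos (show (0:ℝ) < y - (1 - s) / 2 by linarith)
      (show (0:ℝ) < y - Rplus by linarith)]
  have hmid : ∀ y, (1 - s) / 2 ≤ y → y ≤ Rplus → 0 ≤ h y := by
    intro y hy1 hy2; rw [hfact y]
    nlinarith [mul_nonneg (show (0:ℝ) ≤ y - (1 - s) / 2 by linarith)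
      (show (0:ℝ) ≤ Rplus - y by linarith)]
  intro z
  constructor
  · rintro ⟨⟨hz0, hz1⟩, ε, hε, hL, hR⟩
    by_contra hcon
    push_neg at hcon
    obtain ⟨hz_ne0, hz_neR⟩ := hcon
    have hz0' : 0 < z := lt_of_le_of_ne hz0 (Ne.symm hz_ne0)
    rcases le_or_gt z ((1 - s) / 2) with hA | h1
    · -- 0 < z ≤ Rm : point just left has M < 0
      set y := max (z / 2) (z - ε / 2) with hy
      have hy1 : z - ε < y := lt_of_lt_of_le (by linarith) (le_max_right _ _)
      have hy2 : y < z := max_lt (by linarith) (by linarith)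
      have hy0 : 0 ≤ y := le_trans (by linarith) (le_max_left _ _)
      have hMy := hL y hy1 hy2 hy0
      have hhy : h y < 0 := hlt y (by linarith)
      have hyhalf : ¬ ((1:ℝ) / 2 ≤ y) := by push_neg; linarith
      rw [hM y, if_neg (not_le.mpr hhy), if_neg hyhalf] at hMy
      have : 0 < y := by nlinarith
      linarith [hMy]
    · rcases lt_trichotomy z Rplus with hB | heq | hC
      · -- Rm < z < Rplus : point just right has M > 0
        set y := min ((z + Rplus) / 2) (z + ε / 2) with hy
        have hy1 : z < y := lt_min (by linarith) (by linarith)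
        have hy2 : y < z + ε := lt_of_le_of_lt (min_le_right _ _) (by linarith)
        have hyR : y < Rplus := lt_of_le_of_lt (min_le_left _ _) (by linarith)
        have hy3 : y ≤ 1 := by linarith
        have hMy := hR y hy1 hy2 hy3
        have hhy : 0 ≤ h y := hmid y (by linarith) (by linarith)
        rcases le_or_gt ((1:ℝ) / 2) y with hyh | hyh
        · rw [hM y, if_pos hhy, if_pos hyh] at hMy; linarith
        · rw [hM y, if_pos hhy, if_neg (not_le.mpr hyh)] at hMy; linarith
      · exact hz_neR heq
      · -- Rplus < z : point just left has M < 0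
        set y := max ((z + Rplus) / 2) (z - ε / 2) with hy
        have hy1 : z - ε < y := lt_of_lt_of_le (by linarith) (le_max_right _ _)
        have hy2 : y < z := max_lt (by linarith) (by linarith)
        have hyR : Rplus < y := lt_of_lt_of_le (by linarith) (le_max_left _ _)
        have hy0 : 0 ≤ y := by linarith
        have hMy := hL y hy1 hy2 hy0
        have hhy : h y < 0 := hgt y hyR
        have hyhalf : (1:ℝ) / 2 ≤ y := by linarith
        rw [hM y, if_neg (not_le.mpr hhy), if_pos hyhalf] at hMy
        linarith
  · rintro (rfl | heq)
    · refine ⟨⟨le_refl 0, zero_le_one⟩, (1 - s) / 2, hRm_pos, ?_, ?_⟩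
      · intro y _ hneg hpos; linarith
      · intro y hy1 hy2 _
        have hhy : h y < 0 := hlt y (by linarith)
        have hyhalf : ¬ ((1:ℝ) / 2 ≤ y) := by push_neg; linarith
        rw [hM y, if_neg (not_le.mpr hhy), if_neg hyhalf]
        linarith
    · rw [heq]
      refine ⟨⟨by linarith, by linarith⟩, Rplus - 1 / 2, by linarith, ?_, ?_⟩
      · intro y hy1 hy2 hy0
        have hhy : 0 ≤ h y := hmid y (by linarith) (by linarith)
        have hyhalf : (1:ℝ) / 2 ≤ y := by linarith
        rw [hM y, if_pos hhy, if_pos hyhalf]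
        linarith
      · intro y hy1 hy2 hy3
        have hhy : h y < 0 := hgt y hy1
        have hyhalf : (1:ℝ) / 2 ≤ y := by linarith
        rw [hM y, if_neg (not_le.mpr hhy), if_pos hyhalf]
        linarith
end

section
/- In the rational–herding game (α_R + α_H = 1) with ΔP ≥ m/2 and α_R ≥ 1/2, the only attractor of M(z) = α_R·𝟙{h(z) ≥ 0} + (1−α_R)·𝟙{z ≥ 1/2} − z is z = 0. -/
/-- in the rational–herding game (α_R + α_H = 1) with ΔP ≥ m/2
and α_R ≥ 1/2, the only attractor of M in [0,1] is z = 0. -/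
theorem stmt15 (m ΔP αR : ℝ) (hm : 0 < m) (hΔ : 0 < ΔP) (hΔm : m / 2 ≤ ΔP)
    (hαR : αR ∈ Set.Icc (0 : ℝ) 1) (hαRhalf : 1 / 2 ≤ αR)
    (h M : ℝ → ℝ) (hdef : ∀ z, h z = 2 * m * z * (1 - z) - ΔP)
    (hM : ∀ z, M z = αR * (if 0 ≤ h z then 1 else 0) +
        (1 - αR) * (if (1 : ℝ) / 2 ≤ z then 1 else 0) - z) :
    ∀ z : ℝ, (z ∈ Set.Icc (0 : ℝ) 1 ∧
        ∃ ε > (0 : ℝ),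
          (∀ y : ℝ, z - ε < y → y < z → 0 ≤ y → 0 < M y) ∧
          (∀ y : ℝ, z < y → y < z + ε → y ≤ 1 → M y < 0)) ↔
      z = 0 := by
  have hneg : ∀ y : ℝ, y ≠ 1/2 → h y < 0 := by
    intro y hy
    rw [hdef]
    have hd : y - 1/2 ≠ 0 := fun hh => hy (by linarith)
    have hsq : 0 < (y - 1/2)^2 := by positivity
    nlinarith
  intro z
  constructor
  · rintro ⟨⟨hz0, hz1⟩, ε, hε, hleft, -⟩
    by_contra hzne
    have hzpos : 0 < z := lt_of_le_of_ne hz0 (Ne.symm hzne)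
    by_cases hhalf : z ≤ 1/2
    · set y := max (z - ε/2) (z/2) with hy
      have hy0 : 0 < y := lt_max_of_lt_right (by linarith)
      have hyz : y < z := max_lt (by linarith) (by linarith)
      have hylt : y < 1/2 := lt_of_lt_of_le hyz hhalf
      have hMy := hleft y (lt_of_lt_of_le (by linarith) (le_max_left _ _)) hyz hy0.le
      rw [hM y, if_neg (not_le.mpr (hneg y (ne_of_lt hylt))), if_neg (not_le.mpr hylt)] at hMy
      linarith
    · push_neg at hhalf
      set y := max ((z + 1/2)/2) (z - ε/2) with hy
      have hy0 : 1/2 < y := lt_max_of_lt_left (by linarith)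
      have hyz : y < z := max_lt (by linarith) (by linarith)
      have hMy := hleft y (lt_of_lt_of_le (by linarith) (le_max_right _ _)) hyz (by linarith)
      rw [hM y, if_neg (not_le.mpr (hneg y (ne_of_gt hy0))), if_pos hy0.le] at hMy
      obtain ⟨hαR0, hαR1⟩ := hαR
      linarith
  · rintro rfl
    refine ⟨⟨le_refl 0, zero_le_one⟩, 1/2, by norm_num, ?_, ?_⟩
    · intro y _ hy2 hy3; linarith
    · intro y hy1 hy2 _
      rw [hM y, if_neg (not_le.mpr (hneg y (by intro hh; rw [hh] at hy2; linarith))),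
        if_neg (by intro hh; linarith)]
      linarith
end
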